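/- Let A ∈ ℝ^{m×n}, v ∈ ℝᵐ with v ≠ 0, set M := A Aᵀ, and let ν > 0, τ > 0. For α > 0 define s(α) := −(M + α I)⁻¹ v and φ(α) := 1/‖s(α)‖₂ − 1/(ν τ). Then φ is strictly increasing and concave on (0, ∞), and φ is differentiable on (0, ∞) with φ'(α) = (s(α)ᵀ (M + α I)⁻¹ s(α)) / ‖s(α)‖₂³ for every α > 0. -/

import Mathlib

open Matrix

/-- The Euclidean (`ℓ₂`) norm of a vector in `Fin k → ℝ`. -/
noncomputable def norm2 {k : ℕ} (v : Fin k → ℝ) : ℝ := Real.sqrt (∑ i, v i ^ 2)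

/-- `s(α) = −(M + αI)⁻¹ v`. -/
noncomputable def sVec {m : ℕ} (M : Matrix (Fin m) (Fin m) ℝ) (v : Fin m → ℝ) (α : ℝ) :
    Fin m → ℝ :=
  -((M + α • (1 : Matrix (Fin m) (Fin m) ℝ))⁻¹.mulVec v)

/-!
Write `R(α) = (M + αI)⁻¹` and `mₖ(α) = vᵀ R(α)ᵏ v`. Then `‖s(α)‖₂² = m₂` and
`s(α)ᵀ R(α) s(α) = m₃`, and `R' = -R²` gives `mₖ' = -k mₖ₊₁`. Hence `φ + 1/(ντ) = m₂^(-1/2)` has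
`φ' = m₃ / m₂^(3/2)`, positive because `R` is positive definite, and
`φ'' = 3 (m₃² - m₂ m₄) / m₂^(5/2)`, nonpositive by Cauchy–Schwarz for `R v` and `R² v`
(`R` is symmetric).
-/

theorem HasDerivAt.inv_sqrt {f : ℝ → ℝ} {f' x : ℝ} (hf : HasDerivAt f f' x) (hx : 0 < f x) :
    HasDerivAt (fun y => (√(f y))⁻¹) (-f' / (2 * √(f x) ^ 3)) x := by
  have hs : 0 < √(f x) := Real.sqrt_pos.mpr hx
  refine ((hf.sqrt hx.ne').inv hs.ne').congr_deriv ?_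
  field_simp

theorem HasDerivAt.div_sqrt_pow_three {f g : ℝ → ℝ} {f' g' x : ℝ} (hg : HasDerivAt g g' x)
    (hf : HasDerivAt f f' x) (hx : 0 < f x) :
    HasDerivAt (fun y => g y / √(f y) ^ 3)
      ((2 * f x * g' - 3 * g x * f') / (2 * √(f x) ^ 5)) x := by
  have hs : 0 < √(f x) := Real.sqrt_pos.mpr hx
  refine (hg.div ((hf.sqrt hx.ne').fun_pow 3) (by positivity)).congr_deriv ?_
  have hsq : √(f x) ^ 2 = f x := Real.sq_sqrt hx.le
  set s := √(f x)
  rw [← hsq]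
  field_simp
  ring

namespace Matrix

theorem IsSymm.dotProduct_pow_add_mulVec {ι R : Type*} [Fintype ι] [DecidableEq ι]
    [CommSemiring R] {B : Matrix ι ι R} (hB : B.IsSymm) (v : ι → R) (j k : ℕ) :
    v ⬝ᵥ (B ^ (j + k) *ᵥ v) = (B ^ j *ᵥ v) ⬝ᵥ (B ^ k *ᵥ v) := by
  rw [pow_add, ← mulVec_mulVec, dotProduct_mulVec, ← mulVec_transpose, (hB.pow j).eq]

theorem IsSymm.dotProduct_pow_add_mulVec_sq_le {ι : Type*} [Fintype ι] [DecidableEq ι]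
    {B : Matrix ι ι ℝ} (hB : B.IsSymm) (v : ι → ℝ) (j k : ℕ) :
    (v ⬝ᵥ (B ^ (j + k) *ᵥ v)) ^ 2 ≤ (v ⬝ᵥ (B ^ (j + j) *ᵥ v)) * (v ⬝ᵥ (B ^ (k + k) *ᵥ v)) := by
  rw [hB.dotProduct_pow_add_mulVec, hB.dotProduct_pow_add_mulVec, hB.dotProduct_pow_add_mulVec]
  simpa only [dotProduct, sq] using
    Finset.sum_mul_sq_le_sq_mul_sq Finset.univ (B ^ j *ᵥ v) (B ^ k *ᵥ v)

theorem IsHermitian.isSymm_of_real {ι : Type*} {B : Matrix ι ι ℝ} (hB : B.IsHermitian) :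
    B.IsSymm :=
  (conjTranspose_eq_transpose_of_trivial B).symm.trans hB

noncomputable def dotProductMulVecCLM {m n : Type*} [Fintype m] [Fintype n] (v : m → ℝ)
    (w : n → ℝ) : Matrix m n ℝ →L[ℝ] ℝ :=
  LinearMap.toContinuousLinearMap
    { toFun := fun X => v ⬝ᵥ (X *ᵥ w)
      map_add' := fun X Y => by simp only [add_mulVec, dotProduct_add]
      map_smul' := fun c X => by simp only [smul_mulVec, dotProduct_smul, RingHom.id_apply] }

theorem PosSemidef.posDef_add_smul_one {ι : Type*} [DecidableEq ι] {M : Matrix ι ι ℝ}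
    (hM : M.PosSemidef) {α : ℝ} (hα : 0 < α) : (M + α • (1 : Matrix ι ι ℝ)).PosDef :=
  PosDef.posSemidef_add hM (PosDef.one.smul hα)

variable {ι : Type*} [Fintype ι] [DecidableEq ι]

noncomputable def resolventMoment (M : Matrix ι ι ℝ) (v : ι → ℝ) (k : ℕ) (α : ℝ) : ℝ :=
  v ⬝ᵥ ((M + α • (1 : Matrix ι ι ℝ))⁻¹ ^ k *ᵥ v)

variable {M : Matrix ι ι ℝ} {v : ι → ℝ} {α : ℝ}

section Resolvent

-- Any norm would do: differentiability on a finite-dimensional space does not depend on it.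
attribute [local instance] Matrix.linftyOpNormedRing Matrix.linftyOpNormedAlgebra

theorem hasDerivAt_inv_add_smul_one (h : IsUnit (M + α • (1 : Matrix ι ι ℝ))) :
    HasDerivAt (fun β : ℝ => (M + β • (1 : Matrix ι ι ℝ))⁻¹) (-((M + α • 1)⁻¹ ^ 2)) α := by
  have hshift : HasDerivAt (fun β : ℝ => M + β • (1 : Matrix ι ι ℝ)) 1 α :=
    (((hasDerivAt_id α).smul_const (1 : Matrix ι ι ℝ)).const_add M).congr_deriv (one_smul ℝ _)
  have hinv := hasFDerivAt_ringInverse (𝕜 := ℝ) h.unit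
  rw [h.unit_spec] at hinv
  have hR : (↑h.unit⁻¹ : Matrix ι ι ℝ) = (M + α • 1)⁻¹ := by
    rw [nonsing_inv_eq_ringInverse, ← Ring.inverse_unit h.unit, h.unit_spec]
  have := hinv.comp_hasDerivAt α hshift
  simp only [Function.comp_def, ← nonsing_inv_eq_ringInverse, hR] at this
  exact this.congr_deriv (by simp [sq])

theorem hasDerivAt_inv_add_smul_one_pow (h : IsUnit (M + α • (1 : Matrix ι ι ℝ))) (k : ℕ) :
    HasDerivAt (fun β : ℝ => (M + β • (1 : Matrix ι ι ℝ))⁻¹ ^ k)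
      (-((k : ℝ) • (M + α • 1)⁻¹ ^ (k + 1))) α := by
  induction k with
  | zero =>
    simp only [pow_zero, Nat.cast_zero, zero_smul, neg_zero]
    exact hasDerivAt_const α 1
  | succ k ih =>
    have := ih.fun_mul (hasDerivAt_inv_add_smul_one h)
    simp only [← pow_succ] at this
    refine this.congr_deriv ?_
    rw [neg_mul, smul_mul_assoc, ← pow_succ, mul_neg, ← pow_add]
    push_cast
    rw [add_smul, one_smul]
    abel

theorem hasDerivAt_resolventMoment (h : IsUnit (M + α • (1 : Matrix ι ι ℝ))) (k : ℕ) :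
    HasDerivAt (resolventMoment M v k) (-(k * resolventMoment M v (k + 1) α)) α := by
  have := (dotProductMulVecCLM v v).hasFDerivAt.comp_hasDerivAt α
    (hasDerivAt_inv_add_smul_one_pow h k)
  refine this.congr_deriv ?_
  change v ⬝ᵥ (-((k : ℝ) • _) *ᵥ v) = _
  rw [neg_mulVec, smul_mulVec, dotProduct_neg, dotProduct_smul, smul_eq_mul, resolventMoment]

end Resolvent

theorem IsSymm.inv_add_smul_one (hM : M.IsSymm) (α : ℝ) :
    (M + α • (1 : Matrix ι ι ℝ))⁻¹.IsSymm :=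
  (hM.add (isSymm_one.smul α)).inv

theorem PosSemidef.inv_add_smul_one_mulVec_ne_zero (hM : M.PosSemidef) (hα : 0 < α)
    (hv : v ≠ 0) : (M + α • (1 : Matrix ι ι ℝ))⁻¹ *ᵥ v ≠ 0 := by
  have hinj := mulVec_injective_iff_isUnit.mpr (hM.posDef_add_smul_one hα).inv.isUnit
  simpa only [mulVec_zero] using hinj.ne hv

theorem PosSemidef.resolventMoment_two_pos (hM : M.PosSemidef) (hα : 0 < α) (hv : v ≠ 0) :
    0 < resolventMoment M v 2 α := by
  rw [resolventMoment, (hM.isHermitian.isSymm_of_real.inv_add_smul_one α).dotProduct_pow_add_mulVec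
    v 1 1, pow_one]
  simpa only [star_trivial] using
    dotProduct_star_self_pos_iff.mpr (hM.inv_add_smul_one_mulVec_ne_zero hα hv)

theorem PosSemidef.resolventMoment_three_pos (hM : M.PosSemidef) (hα : 0 < α) (hv : v ≠ 0) :
    0 < resolventMoment M v 3 α := by
  rw [resolventMoment, (hM.isHermitian.isSymm_of_real.inv_add_smul_one α).dotProduct_pow_add_mulVec
    v 1 2, pow_one, sq, ← mulVec_mulVec]
  simpa only [star_trivial] using (hM.posDef_add_smul_one hα).inv.dotProduct_mulVec_pos
    (hM.inv_add_smul_one_mulVec_ne_zero hα hv)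

theorem IsSymm.resolventMoment_three_sq_le (hM : M.IsSymm) (α : ℝ) :
    resolventMoment M v 3 α ^ 2 ≤ resolventMoment M v 2 α * resolventMoment M v 4 α :=
  (hM.inv_add_smul_one α).dotProduct_pow_add_mulVec_sq_le v 1 2

theorem PosSemidef.hasDerivAt_resolventMoment_three_div_sqrt (hM : M.PosSemidef) (hv : v ≠ 0)
    (hα : 0 < α) :
    HasDerivAt (fun β => M.resolventMoment v 3 β / √(M.resolventMoment v 2 β) ^ 3)
      (3 * (M.resolventMoment v 3 α ^ 2 - M.resolventMoment v 2 α * M.resolventMoment v 4 α) /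
        √(M.resolventMoment v 2 α) ^ 5) α := by
  have hunit := (hM.posDef_add_smul_one hα).isUnit
  refine ((hasDerivAt_resolventMoment hunit 3).div_sqrt_pow_three
    (hasDerivAt_resolventMoment hunit 2) (hM.resolventMoment_two_pos hα hv)).congr_deriv ?_
  field_simp
  ring

end Matrix

section Secular

variable {m : ℕ} {M : Matrix (Fin m) (Fin m) ℝ} {v : Fin m → ℝ} {α : ℝ}

theorem norm2_sVec (hM : M.IsSymm) (α : ℝ) :
    norm2 (sVec M v α) = √(M.resolventMoment v 2 α) := by
  rw [resolventMoment, (hM.inv_add_smul_one α).dotProduct_pow_add_mulVec v 1 1, pow_one, norm2,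
    sVec]
  simp only [Pi.neg_apply, neg_mul_neg, dotProduct, sq]

theorem sVec_dotProduct_inv_mulVec_sVec (hM : M.IsSymm) (α : ℝ) :
    sVec M v α ⬝ᵥ (M + α • (1 : Matrix (Fin m) (Fin m) ℝ))⁻¹ *ᵥ sVec M v α =
      M.resolventMoment v 3 α := by
  rw [resolventMoment, (hM.inv_add_smul_one α).dotProduct_pow_add_mulVec v 1 2, pow_one, sq,
    ← mulVec_mulVec, sVec, mulVec_neg, neg_dotProduct_neg]

theorem hasDerivAt_one_div_norm2_sVec (hM : M.PosSemidef) (hv : v ≠ 0) (hα : 0 < α) :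
    HasDerivAt (fun β => 1 / norm2 (sVec M v β))
      (M.resolventMoment v 3 α / √(M.resolventMoment v 2 α) ^ 3) α := by
  have hsymm := hM.isHermitian.isSymm_of_real
  simp only [norm2_sVec hsymm, one_div]
  have hunit := (hM.posDef_add_smul_one hα).isUnit
  refine ((hasDerivAt_resolventMoment hunit 2).inv_sqrt
    (hM.resolventMoment_two_pos hα hv)).congr_deriv ?_
  field_simp
  ring

end Secular

theorem stmt_18 {m n : ℕ} (A : Matrix (Fin m) (Fin n) ℝ) (v : Fin m → ℝ) (hv : v ≠ 0)
    (M : Matrix (Fin m) (Fin m) ℝ) (hM : M = A * Aᵀ) (ν τ : ℝ) :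
    StrictMonoOn (fun α : ℝ => 1 / norm2 (sVec M v α) - 1 / (ν * τ)) (Set.Ioi (0 : ℝ)) ∧
    ConcaveOn ℝ (Set.Ioi (0 : ℝ)) (fun α : ℝ => 1 / norm2 (sVec M v α) - 1 / (ν * τ)) ∧
    (∀ α : ℝ, 0 < α →
      HasDerivAt (fun α : ℝ => 1 / norm2 (sVec M v α) - 1 / (ν * τ))
        ((sVec M v α ⬝ᵥ (M + α • (1 : Matrix (Fin m) (Fin m) ℝ))⁻¹.mulVec (sVec M v α)) /
          norm2 (sVec M v α) ^ 3) α) := by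
  have hpsd : M.PosSemidef := by simpa [hM] using posSemidef_self_mul_conjTranspose A
  have hsymm : M.IsSymm := hpsd.isHermitian.isSymm_of_real
  have hφ (α : ℝ) (hα : 0 < α) := (hasDerivAt_one_div_norm2_sVec hpsd hv hα).sub_const (1 / (ν * τ))
  have hcont : ContinuousOn (fun α : ℝ => 1 / norm2 (sVec M v α) - 1 / (ν * τ)) (Set.Ioi 0) :=
    fun α hα => (hφ α hα).continuousAt.continuousWithinAt
  refine ⟨strictMonoOn_of_hasDerivWithinAt_pos (convex_Ioi 0) hcont
      (fun α hα => (hφ α (by simpa using hα)).hasDerivWithinAt) fun α hα => ?_,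
    concaveOn_of_hasDerivWithinAt2_nonpos (convex_Ioi 0) hcont
      (fun α hα => (hφ α (by simpa using hα)).hasDerivWithinAt)
      (fun α hα => (hpsd.hasDerivAt_resolventMoment_three_div_sqrt hv
        (by simpa using hα)).hasDerivWithinAt) fun α hα => ?_,
    fun α hα => ?_⟩
  · rw [interior_Ioi] at hα
    exact div_pos (hpsd.resolventMoment_three_pos hα hv)
      (pow_pos (Real.sqrt_pos.mpr (hpsd.resolventMoment_two_pos hα hv)) 3)
  · exact div_nonpos_of_nonpos_of_nonneg
      (by linarith [hsymm.resolventMoment_three_sq_le (v := v) α]) (by positivity)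
  · rw [sVec_dotProduct_inv_mulVec_sVec hsymm, norm2_sVec hsymm]
    exact hφ α hα
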